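/- Let u : [0,b] → ℝ be absolutely continuous with u(0) = u(b), and suppose u'(t) ≤ −c·u(t) + g(t) for almost all t ∈ [0,b], where c > 0, g ∈ L¹(0,b) with g ≥ 0, and u ≥ 0. Then u(0) ≤ (e^{cb}/(e^{cb} − 1)) ∫₀ᵇ g(s) ds, and consequently u(t) ≤ (e^{cb}/(e^{cb} − 1)) ∫₀ᵇ g(s) ds + ∫₀ᵗ g(s) ds for all t ∈ [0,b]. -/

import Mathlib

/-!
Multiplying by the integrating factor `e^{cs}` turns `u' ≤ -c u + g` into `(e^{cs} u)' ≤ e^{cs} g`;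
since `u` is absolutely continuous this integrates over `[0, b]` to
`e^{cb} u(b) - u(0) ≤ ∫ e^{cs} g ≤ e^{cb} ∫ g`, and periodicity makes the left side
`(e^{cb} - 1) u(0)`. For the pointwise bound, `u ≥ 0` gives `u' ≤ g`, so `u(t) ≤ u(0) + ∫₀ᵗ g`.
-/

open MeasureTheory intervalIntegral Set Real

theorem integral_exp_mul_mul_deriv_add_mul_eq_sub {u u' : ℝ → ℝ} {a b : ℝ} (c : ℝ) (hab : a ≤ b)
    (hu' : IntervalIntegrable u' volume a b)
    (hu : ∀ t ∈ Icc a b, u t = u a + ∫ s in a..t, u' s) :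
    ∫ s in a..b, exp (c * s) * (u' s + c * u s) = exp (c * b) * u b - exp (c * a) * u a := by
  set U : ℝ → ℝ := fun t ↦ u a + ∫ s in a..t, u' s
  have hU : AbsolutelyContinuousOnInterval U a b :=
    contDiffOn_const.absolutelyContinuousOnInterval.add
      (hu'.absolutelyContinuousOnInterval_intervalIntegral left_mem_uIcc)
  have hUu : ∀ t ∈ Icc a b, U t = u t := fun t ht ↦ (hu t ht).symm
  have hE : AbsolutelyContinuousOnInterval (fun s ↦ exp (c * s)) a b :=
    (by fun_prop : ContDiff ℝ 1 fun s ↦ exp (c * s)).contDiffOn.absolutelyContinuousOnInterval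
  calc ∫ s in a..b, exp (c * s) * (u' s + c * u s)
      = ∫ s in a..b, deriv (fun s ↦ exp (c * s)) s * U s + exp (c * s) * deriv U s := by
        refine integral_congr_ae ?_
        filter_upwards [hu'.ae_hasDerivAt_integral] with s hderiv hs
        have hs' : s ∈ Icc a b := Ioc_subset_Icc_self (uIoc_of_le hab ▸ hs)
        have hsu : s ∈ uIcc a b := uIcc_of_le hab ▸ hs'
        rw [((hderiv hsu a left_mem_uIcc).const_add (u a)).deriv, hUu s hs']
        have hexp : HasDerivAt (fun s ↦ exp (c * s)) (exp (c * s) * c) s := by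
          simpa using ((hasDerivAt_id s).const_mul c).exp
        rw [hexp.deriv]
        ring
    _ = exp (c * b) * U b - exp (c * a) * U a := hE.integral_deriv_mul_eq_sub hU
    _ = exp (c * b) * u b - exp (c * a) * u a := by
        rw [hUu a (left_mem_Icc.2 hab), hUu b (right_mem_Icc.2 hab)]

theorem exp_mul_sub_exp_mul_le_integral {u u' g : ℝ → ℝ} {a b c : ℝ} (hab : a ≤ b)
    (hu' : IntervalIntegrable u' volume a b) (hg : IntervalIntegrable g volume a b)
    (hu : ∀ t ∈ Icc a b, u t = u a + ∫ s in a..t, u' s)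
    (hineq : ∀ᵐ t ∂volume.restrict (Icc a b), u' t ≤ -c * u t + g t) :
    exp (c * b) * u b - exp (c * a) * u a ≤ ∫ s in a..b, exp (c * s) * g s := by
  have hexp : ContinuousOn (fun s ↦ exp (c * s)) (uIcc a b) := by fun_prop
  have hu_cont : ContinuousOn u (uIcc a b) := by
    refine ((continuousOn_const (c := u a)).add
      (continuousOn_primitive_interval' hu' left_mem_uIcc)).congr fun t ht ↦ ?_
    exact hu t (uIcc_of_le hab ▸ ht)
  rw [← integral_exp_mul_mul_deriv_add_mul_eq_sub c hab hu' hu]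
  refine integral_mono_ae_restrict hab
    ((hu'.add (hu_cont.intervalIntegrable.const_mul c)).continuousOn_mul hexp)
    (hg.continuousOn_mul hexp) ?_
  filter_upwards [hineq] with s hs
  have := exp_pos (c * s)
  nlinarith

/-- Gronwall-type a priori bound for periodic functions:
if `u' ≤ −c u + g` a.e. on `[0,b]`, `u ≥ 0`, `u(0) = u(b)`, then
`u(0) ≤ e^{cb}/(e^{cb} − 1) ∫₀ᵇ g` and
`u(t) ≤ e^{cb}/(e^{cb} − 1) ∫₀ᵇ g + ∫₀ᵗ g` for all `t ∈ [0,b]`. -/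
theorem periodic_gronwall_bound
    (b c : ℝ) (hb : 0 < b) (hc : 0 < c)
    (u u' g : ℝ → ℝ)
    (hu' : IntegrableOn u' (Set.Icc 0 b))
    (hAC : ∀ t ∈ Set.Icc (0:ℝ) b, u t = u 0 + ∫ s in (0:ℝ)..t, u' s)
    (hper : u 0 = u b)
    (hupos : ∀ t ∈ Set.Icc (0:ℝ) b, 0 ≤ u t)
    (hg : IntegrableOn g (Set.Icc 0 b))
    (hgpos : ∀ t ∈ Set.Icc (0:ℝ) b, 0 ≤ g t)
    (hineq : ∀ᵐ t ∂(volume.restrict (Set.Icc (0:ℝ) b)),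
      u' t ≤ -c * u t + g t) :
    u 0 ≤ (Real.exp (c * b) / (Real.exp (c * b) - 1)) * ∫ s in (0:ℝ)..b, g s ∧
    ∀ t ∈ Set.Icc (0:ℝ) b,
      u t ≤ (Real.exp (c * b) / (Real.exp (c * b) - 1)) * (∫ s in (0:ℝ)..b, g s)
        + ∫ s in (0:ℝ)..t, g s := by
  have hu'I := (intervalIntegrable_iff_integrableOn_Icc_of_le hb.le).2 hu'
  have hgI := (intervalIntegrable_iff_integrableOn_Icc_of_le hb.le).2 hg
  have hu0 : u 0 * (exp (c * b) - 1) ≤ exp (c * b) * ∫ s in (0:ℝ)..b, g s :=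
    calc u 0 * (exp (c * b) - 1) = exp (c * b) * u b - exp (c * 0) * u 0 := by
          rw [← hper, mul_zero, exp_zero]; ring
      _ ≤ ∫ s in (0:ℝ)..b, exp (c * s) * g s :=
          exp_mul_sub_exp_mul_le_integral hb.le hu'I hgI hAC hineq
      _ ≤ ∫ s in (0:ℝ)..b, exp (c * b) * g s := by
          refine integral_mono_on hb.le (hgI.continuousOn_mul (by fun_prop))
            (hgI.const_mul _) fun s hs ↦ ?_
          exact mul_le_mul_of_nonneg_right (by gcongr; exact hs.2) (hgpos s hs)
      _ = exp (c * b) * ∫ s in (0:ℝ)..b, g s := integral_const_mul _ _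
  have hu0_le : u 0 ≤ exp (c * b) / (exp (c * b) - 1) * ∫ s in (0:ℝ)..b, g s := by
    rwa [div_mul_eq_mul_div, le_div_iff₀ (sub_pos.2 (one_lt_exp_iff.2 (mul_pos hc hb)))]
  refine ⟨hu0_le, fun t ht ↦ ?_⟩
  have hu'_le_g : ∀ᵐ s ∂volume.restrict (Icc 0 t), u' s ≤ g s := by
    refine ae_restrict_of_ae_restrict_of_subset (Icc_subset_Icc_right ht.2) ?_
    filter_upwards [hineq, ae_restrict_mem measurableSet_Icc] with s hs hsI
    nlinarith [hupos s hsI]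
  have hsub : uIcc 0 t ⊆ uIcc 0 b := uIcc_subset_uIcc_left (uIcc_of_le hb.le ▸ ht)
  have hint := integral_mono_ae_restrict ht.1 (hu'I.mono_set hsub) (hgI.mono_set hsub) hu'_le_g
  rw [hAC t ht]
  linarith
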